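/- Let ψ : [0,1] → ℝⁿ be a C¹ curve and Γ, Φ : ℝⁿ → ℝⁿ continuous vector fields. If μ and ν are C¹ functions on a neighborhood of the image of ψ that both satisfy ∇f + Γ f = Φ along ψ, and μ(ψ(0)) = ν(ψ(0)), then μ(ψ(t)) = ν(ψ(t)) for all t ∈ [0,1]. -/

import Mathlib

/-!
Subtracting the two equations gives `∇μ - ∇ν = (ν - μ) Γ` along the curve, so by the chain rule
`g(t) = μ(ψ t) - ν(ψ t)` solves the scalar linear ODE `g' = -⟪Γ(ψ t), ψ'(t)⟫ g` with a coefficient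
that is continuous, hence bounded, on `[0, 1]`. Grönwall's inequality and `g(0) = 0` force `g = 0`.
-/

open scoped RealInnerProductSpace
open Set

theorem eq_zero_of_hasDerivWithinAt_smul_self {E : Type*} [NormedAddCommGroup E]
    [NormedSpace ℝ E] {c : ℝ → ℝ} {f : ℝ → E} {a b : ℝ} (hc : ContinuousOn c (Icc a b))
    (hf : ContinuousOn f (Icc a b))
    (hf' : ∀ t ∈ Ico a b, HasDerivWithinAt f (c t • f t) (Ici t) t) (ha : f a = 0) :
    ∀ t ∈ Icc a b, f t = 0 := by
  obtain ⟨K, hK⟩ := isCompact_Icc.exists_bound_of_continuousOn hc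
  refine eq_zero_of_abs_deriv_le_mul_abs_self_of_eq_zero_right (K := K) hf hf' ha fun t ht => ?_
  rw [norm_smul]
  exact mul_le_mul_of_nonneg_right (hK t (Ico_subset_Icc_self ht)) (norm_nonneg _)

theorem HasGradientAt.comp_hasDerivAt {F : Type*} [NormedAddCommGroup F]
    [InnerProductSpace ℝ F] [CompleteSpace F] {f : F → ℝ} {f' : F} {γ : ℝ → F} {γ' : F}
    {t : ℝ} (hf : HasGradientAt f f' (γ t)) (hγ : HasDerivAt γ γ' t) :
    HasDerivAt (fun s => f (γ s)) ⟪f', γ'⟫ t := by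
  have h := hf.hasFDerivAt.comp_hasDerivAt t hγ
  simp only [InnerProductSpace.toDual_apply_apply] at h
  exact h

theorem hasDerivAt_sub_comp_of_gradient_add_smul_eq {F : Type*} [NormedAddCommGroup F]
    [InnerProductSpace ℝ F] [CompleteSpace F] {μ ν : F → ℝ} {Γ Φ : F → F} {ψ : ℝ → F}
    {ψ' : F} {t : ℝ} (hψ : HasDerivAt ψ ψ' t) (hμ : DifferentiableAt ℝ μ (ψ t))
    (hν : DifferentiableAt ℝ ν (ψ t))
    (heqμ : gradient μ (ψ t) + μ (ψ t) • Γ (ψ t) = Φ (ψ t))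
    (heqν : gradient ν (ψ t) + ν (ψ t) • Γ (ψ t) = Φ (ψ t)) :
    HasDerivAt (fun s => μ (ψ s) - ν (ψ s))
      ((-⟪Γ (ψ t), ψ'⟫) • (μ (ψ t) - ν (ψ t))) t := by
  have hgrad : gradient μ (ψ t) - gradient ν (ψ t) = (ν (ψ t) - μ (ψ t)) • Γ (ψ t) := by
    rw [sub_smul, sub_eq_sub_iff_add_eq_add, heqμ, add_comm, heqν]
  have h := (hμ.hasGradientAt.comp_hasDerivAt hψ).sub (hν.hasGradientAt.comp_hasDerivAt hψ)
  rw [← inner_sub_left, hgrad, real_inner_smul_left] at h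
  exact h.congr_deriv (by rw [smul_eq_mul]; ring)

theorem stmt_1_general {n : ℕ} (ψ : ℝ → EuclideanSpace ℝ (Fin n))
    (Γ Φ : EuclideanSpace ℝ (Fin n) → EuclideanSpace ℝ (Fin n))
    (U : Set (EuclideanSpace ℝ (Fin n))) (μ ν : EuclideanSpace ℝ (Fin n) → ℝ)
    (hψ : ContDiff ℝ 1 ψ) (hΓ : Continuous Γ)
    (hU : IsOpen U) (hUim : ψ '' Set.Icc (0:ℝ) 1 ⊆ U)
    (hμ : ContDiffOn ℝ 1 μ U) (hν : ContDiffOn ℝ 1 ν U)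
    (heqμ : ∀ t ∈ Set.Icc (0:ℝ) 1,
      gradient μ (ψ t) + μ (ψ t) • Γ (ψ t) = Φ (ψ t))
    (heqν : ∀ t ∈ Set.Icc (0:ℝ) 1,
      gradient ν (ψ t) + ν (ψ t) • Γ (ψ t) = Φ (ψ t))
    (h0 : μ (ψ 0) = ν (ψ 0)) :
    ∀ t ∈ Set.Icc (0:ℝ) 1, μ (ψ t) = ν (ψ t) := by
  have hderiv : ∀ t ∈ Icc (0:ℝ) 1, HasDerivAt (fun s => μ (ψ s) - ν (ψ s))
      ((-⟪Γ (ψ t), deriv ψ t⟫) • (μ (ψ t) - ν (ψ t))) t := by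
    intro t ht
    have hψU : U ∈ nhds (ψ t) := hU.mem_nhds (hUim ⟨t, ht, rfl⟩)
    exact hasDerivAt_sub_comp_of_gradient_add_smul_eq
      ((hψ.differentiable one_ne_zero t).hasDerivAt)
      ((hμ.differentiableOn one_ne_zero).differentiableAt hψU)
      ((hν.differentiableOn one_ne_zero).differentiableAt hψU) (heqμ t ht) (heqν t ht)
  have hcoeff : Continuous fun t => -⟪Γ (ψ t), deriv ψ t⟫ :=
    ((hΓ.comp hψ.continuous).inner (hψ.continuous_deriv le_rfl)).neg
  intro t ht
  exact sub_eq_zero.mp (eq_zero_of_hasDerivWithinAt_smul_self hcoeff.continuousOn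
    (fun s hs => (hderiv s hs).continuousAt.continuousWithinAt)
    (fun s hs => (hderiv s (Ico_subset_Icc_self hs)).hasDerivWithinAt) (sub_eq_zero.mpr h0) t ht)

theorem stmt_1 {n : ℕ} (ψ : ℝ → EuclideanSpace ℝ (Fin n))
    (Γ Φ : EuclideanSpace ℝ (Fin n) → EuclideanSpace ℝ (Fin n))
    (U : Set (EuclideanSpace ℝ (Fin n))) (μ ν : EuclideanSpace ℝ (Fin n) → ℝ)
    (hψ : ContDiff ℝ 1 ψ) (hΓ : Continuous Γ) (hΦ : Continuous Φ)
    (hU : IsOpen U) (hUim : ψ '' Set.Icc (0:ℝ) 1 ⊆ U)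
    (hμ : ContDiffOn ℝ 1 μ U) (hν : ContDiffOn ℝ 1 ν U)
    (heqμ : ∀ t ∈ Set.Icc (0:ℝ) 1,
      gradient μ (ψ t) + μ (ψ t) • Γ (ψ t) = Φ (ψ t))
    (heqν : ∀ t ∈ Set.Icc (0:ℝ) 1,
      gradient ν (ψ t) + ν (ψ t) • Γ (ψ t) = Φ (ψ t))
    (h0 : μ (ψ 0) = ν (ψ 0)) :
    ∀ t ∈ Set.Icc (0:ℝ) 1, μ (ψ t) = ν (ψ t) :=
  stmt_1_general ψ Γ Φ U μ ν hψ hΓ hU hUim hμ hν heqμ heqν h0
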